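/- Let M be the 16×16 integer matrix given (in the basis of exceptional classes of Theorem 4.3) with characteristic polynomial (X-1)^4 (X+1)^2 (X²-X+1)(X²+X+1)^3 (X²-3X+1). Then the spectral radius of M equals (3+√5)/2, which is strictly greater than 1. -/

import Mathlib

/-!
The factors `X ∓ 1`, `X² ∓ X + 1` all divide `X⁶ - 1`, so their roots are roots of unity and
have modulus `1`. The remaining factor `X² - 3X + 1` has the real roots `(3 ± √5)/2`, and the
larger one exceeds `1`.
-/

open Polynomial

theorem pow_six_eq_one_of_mul_eq_zero {R : Type*} [CommRing R] [NoZeroDivisors R] {z : R}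
    {a b c d : ℕ}
    (hz : (z - 1) ^ a * (z + 1) ^ b * (z ^ 2 - z + 1) ^ c * (z ^ 2 + z + 1) ^ d = 0) :
    z ^ 6 = 1 := by
  rw [← sub_eq_zero]
  simp only [mul_eq_zero, or_assoc] at hz
  rcases hz with h | h | h | h
  · linear_combination (z + 1) * (z ^ 2 - z + 1) * (z ^ 2 + z + 1) * eq_zero_of_pow_eq_zero h
  · linear_combination (z - 1) * (z ^ 2 - z + 1) * (z ^ 2 + z + 1) * eq_zero_of_pow_eq_zero h
  · linear_combination (z - 1) * (z + 1) * (z ^ 2 + z + 1) * eq_zero_of_pow_eq_zero h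
  · linear_combination (z - 1) * (z + 1) * (z ^ 2 - z + 1) * eq_zero_of_pow_eq_zero h

theorem sq_sub_three_mul_add_one_eq_zero_iff (z : ℂ) :
    z ^ 2 - 3 * z + 1 = 0 ↔
      z = ((3 + Real.sqrt 5) / 2 : ℝ) ∨ z = ((3 - Real.sqrt 5) / 2 : ℝ) := by
  have hsqrt : ((Real.sqrt 5 : ℝ) : ℂ) ^ 2 = 5 := by
    rw [← Complex.ofReal_pow, Real.sq_sqrt (by norm_num)]
    norm_num
  have hfactor : z ^ 2 - 3 * z + 1 =
      (z - ((3 + Real.sqrt 5) / 2 : ℝ)) * (z - ((3 - Real.sqrt 5) / 2 : ℝ)) := by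
    push_cast
    linear_combination (1 / 4 : ℂ) * hsqrt
  rw [hfactor, mul_eq_zero, sub_eq_zero, sub_eq_zero]

theorem one_lt_three_add_sqrt_five_div_two : 1 < (3 + Real.sqrt 5) / 2 := by
  linarith [Real.sqrt_nonneg 5]

theorem abs_three_sub_sqrt_five_div_two_le : |(3 - Real.sqrt 5) / 2| ≤ (3 + Real.sqrt 5) / 2 := by
  have := Real.sqrt_nonneg 5
  exact abs_le.2 ⟨by linarith, by linarith⟩

/-- Let `M` be a 16×16 integer matrix whose characteristic polynomial is
`(X-1)^4 (X+1)^2 (X²-X+1)(X²+X+1)^3 (X²-3X+1)`. Then the spectral radius of `M`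
(largest modulus of a complex eigenvalue, i.e. of a complex root of its characteristic
polynomial) equals `(3+√5)/2`, which is strictly greater than `1`. -/
theorem stmt16 (M : Matrix (Fin 16) (Fin 16) ℤ)
    (h : (M.map ((↑) : ℤ → ℂ)).charpoly =
      (X - 1) ^ 4 * (X + 1) ^ 2 * (X ^ 2 - X + 1) * (X ^ 2 + X + 1) ^ 3 *
        (X ^ 2 - C (3 : ℂ) * X + 1)) :
    IsGreatest
      {r : ℝ | ∃ z : ℂ, (M.map ((↑) : ℤ → ℂ)).charpoly.IsRoot z ∧ ‖z‖ = r}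
      ((3 + Real.sqrt 5) / 2) ∧
    1 < (3 + Real.sqrt 5) / 2 := by
  have hroot (z : ℂ) : (M.map ((↑) : ℤ → ℂ)).charpoly.IsRoot z ↔
      (z - 1) ^ 4 * (z + 1) ^ 2 * (z ^ 2 - z + 1) ^ 1 * (z ^ 2 + z + 1) ^ 3 = 0 ∨
        z ^ 2 - 3 * z + 1 = 0 := by
    simp [h, IsRoot, mul_eq_zero]
  refine ⟨⟨⟨_, (hroot _).2 (Or.inr ((sq_sub_three_mul_add_one_eq_zero_iff _).2 (Or.inl rfl))),
    ?_⟩, ?_⟩, one_lt_three_add_sqrt_five_div_two⟩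
  · rw [Complex.norm_real, Real.norm_of_nonneg (by positivity)]
  rintro r ⟨z, hz, rfl⟩
  rcases (hroot z).1 hz with hunit | hquad
  · rw [Complex.norm_eq_one_of_pow_eq_one (pow_six_eq_one_of_mul_eq_zero hunit) (by norm_num)]
    exact one_lt_three_add_sqrt_five_div_two.le
  · rcases (sq_sub_three_mul_add_one_eq_zero_iff z).1 hquad with rfl | rfl <;>
      rw [Complex.norm_real, Real.norm_eq_abs]
    · exact (abs_of_pos (by positivity)).le
    · exact abs_three_sub_sqrt_five_div_two_le
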